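/- Let γ ∈ (0,1), β ∈ (0,1) and η > 0 suitably small. There is a constant c such that for every N ≥ 1 and every k ∈ ℤ²\{0}, ∑_{h ∈ ℤ²\{0}, h ≠ k, |h| ≤ N or |k−h| ≤ N} |h|^{-(4−2β)} |k−h|^{-(2−β)} ≤ c |k|^{-(2−β)}. -/

import Mathlib

open scoped ENNReal

/-- Euclidean norm of a lattice point in `ℤ²`. -/
noncomputable def latNorm (m : ℤ × ℤ) : ℝ :=
  Real.sqrt ((m.1 : ℝ)^2 + (m.2 : ℝ)^2)

lemma latNorm_nonneg (m : ℤ × ℤ) : 0 ≤ latNorm m := Real.sqrt_nonneg _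

lemma one_le_latNorm {m : ℤ × ℤ} (hm : m ≠ 0) : 1 ≤ latNorm m := by
  have hm' : m.1 ≠ 0 ∨ m.2 ≠ 0 := by
    by_contra h
    push_neg at h
    exact hm (Prod.ext h.1 h.2)
  have hz : (1:ℤ) ≤ m.1^2 + m.2^2 := by
    rcases hm' with h | h
    · nlinarith [Int.one_le_abs h, sq_nonneg m.2, sq_abs m.1]
    · nlinarith [Int.one_le_abs h, sq_nonneg m.1, sq_abs m.2]
  have hz' : (1:ℝ) ≤ (m.1 : ℝ)^2 + (m.2 : ℝ)^2 := by exact_mod_cast hz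
  have := Real.sqrt_le_sqrt hz'
  rwa [Real.sqrt_one] at this

lemma latNorm_eq_complex (m : ℤ × ℤ) :
    latNorm m = ‖(⟨(m.1 : ℝ), (m.2 : ℝ)⟩ : ℂ)‖ := by
  rw [Complex.norm_def, Complex.normSq_mk, latNorm]
  congr 1
  ring

lemma latNorm_triangle (k h : ℤ × ℤ) : latNorm k ≤ latNorm h + latNorm (k - h) := by
  rw [latNorm_eq_complex, latNorm_eq_complex, latNorm_eq_complex]
  have hsum : (⟨(k.1 : ℝ), (k.2 : ℝ)⟩ : ℂ)
      = (⟨(h.1 : ℝ), (h.2 : ℝ)⟩ : ℂ) + (⟨((k - h).1 : ℝ), ((k - h).2 : ℝ)⟩ : ℂ) := by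
    apply Complex.ext <;> simp [Prod.fst_sub, Prod.snd_sub] <;> push_cast <;> ring
  rw [hsum]
  exact norm_add_le _ _

lemma latNorm_summable {a : ℝ} (ha : 2 < a) :
    Summable fun m : ℤ × ℤ => latNorm m ^ (-a) := by
  have h := EisensteinSeries.summable_one_div_norm_rpow ha
  apply (Equiv.summable_iff (finTwoArrowEquiv ℤ)).mp
  apply h.of_nonneg_of_le (fun x => Real.rpow_nonneg (latNorm_nonneg _) _)
  intro x
  by_cases hx : x = 0
  · subst hx
    simp [Function.comp, latNorm, Real.zero_rpow (show -a ≠ 0 by intro h'; nlinarith)]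
  · have hxpos : (0:ℝ) < ‖x‖ := by rwa [norm_pos_iff]
    have hle : ‖x‖ ≤ latNorm (finTwoArrowEquiv ℤ x) := by
      rw [EisensteinSeries.norm_eq_max_natAbs]
      have h0 : ((x 0).natAbs : ℝ) = |((x 0 : ℤ) : ℝ)| := by
        rw [Nat.cast_natAbs]; push_cast; ring
      have h1 : ((x 1).natAbs : ℝ) = |((x 1 : ℤ) : ℝ)| := by
        rw [Nat.cast_natAbs]; push_cast; ring
      have hn : latNorm (finTwoArrowEquiv ℤ x) = Real.sqrt (((x 0 : ℤ):ℝ)^2 + ((x 1 : ℤ):ℝ)^2) := rfl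
      rw [hn]
      push_cast
      rw [max_le_iff]
      constructor
      · rw [h0, ← Real.sqrt_sq_eq_abs]
        exact Real.sqrt_le_sqrt (by nlinarith [sq_nonneg ((x 1 : ℤ):ℝ)])
      · rw [h1, ← Real.sqrt_sq_eq_abs]
        exact Real.sqrt_le_sqrt (by nlinarith [sq_nonneg ((x 0 : ℤ):ℝ)])
    exact Real.rpow_le_rpow_of_nonpos hxpos hle (by linarith)

lemma latNorm_key (β : ℝ) (hβ1 : 0 < β) (hβ2 : β < 1) (k h : ℤ × ℤ)
    (hk : k ≠ 0) (hh : h ≠ 0) (hhk : h ≠ k) :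
    latNorm h ^ (-(4 - 2 * β)) * latNorm (k - h) ^ (-(2 - β)) ≤
      2 ^ (2 - β) * latNorm k ^ (-(2 - β)) *
        (latNorm h ^ (-(4 - 2 * β)) + latNorm (k - h) ^ (-(4 - 2 * β))) := by
  set b : ℝ := 2 - β with hbdef
  have hb : 0 < b := by simp [hbdef]; linarith
  have hkh : k - h ≠ 0 := sub_ne_zero.mpr (Ne.symm hhk)
  have hx : 1 ≤ latNorm h := one_le_latNorm hh
  have hy : 1 ≤ latNorm (k - h) := one_le_latNorm hkh
  have ht : 1 ≤ latNorm k := one_le_latNorm hk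
  set x := latNorm h
  set y := latNorm (k - h)
  set t := latNorm k
  have htri : t ≤ x + y := latNorm_triangle k h
  have hsplit : ∀ z : ℝ, 1 ≤ z → z ^ (-(4 - 2 * β)) = z ^ (-b) * z ^ (-b) := by
    intro z hz
    rw [← Real.rpow_add (by linarith)]
    congr 1
    simp [hbdef]; ring
  have key2 : ∀ z : ℝ, t / 2 ≤ z → 1 ≤ z → z ^ (-b) ≤ 2 ^ b * t ^ (-b) := by
    intro z hz hz1
    have h1 : z ^ (-b) ≤ (t / 2) ^ (-b) :=
      Real.rpow_le_rpow_of_nonpos (by linarith) hz (by linarith)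
    have h2 : (t / 2) ^ (-b) = 2 ^ b * t ^ (-b) := by
      rw [Real.div_rpow (by linarith) (by norm_num), Real.rpow_neg (show (0:ℝ) ≤ 2 by norm_num),
        div_eq_mul_inv, inv_inv, mul_comm]
    linarith
  have hu0 : 0 ≤ x ^ (-b) := Real.rpow_nonneg (by linarith) _
  have hv0 : 0 ≤ y ^ (-b) := Real.rpow_nonneg (by linarith) _
  have ht0 : 0 ≤ t ^ (-b) := Real.rpow_nonneg (by linarith) _
  have h2b : (0:ℝ) ≤ 2 ^ b := Real.rpow_nonneg (by norm_num) _
  have hM0 : 0 ≤ 2 ^ b * t ^ (-b) := mul_nonneg h2b ht0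
  rw [hsplit x hx, hsplit y hy]
  set u := x ^ (-b)
  set v := y ^ (-b)
  set M := 2 ^ b * t ^ (-b)
  have huv : u * v ≤ u * u + v * v := by nlinarith [sq_nonneg (u - v)]
  have hcase : t / 2 ≤ x ∨ t / 2 ≤ y := by
    by_contra hcon
    push_neg at hcon
    linarith
  rcases hcase with hc | hc
  · have hu : u ≤ M := key2 x hc hx
    have h1 : u * (u * v) ≤ M * (u * v) :=
      mul_le_mul_of_nonneg_right hu (mul_nonneg hu0 hv0)
    have h2 : M * (u * v) ≤ M * (u * u + v * v) := mul_le_mul_of_nonneg_left huv hM0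
    nlinarith
  · have hv : v ≤ M := key2 y hc hy
    have h1 : (u * u) * v ≤ (u * u) * M :=
      mul_le_mul_of_nonneg_left hv (mul_nonneg hu0 hu0)
    have h2 : (u * u) * M ≤ (u * u + v * v) * M :=
      mul_le_mul_of_nonneg_right (by nlinarith) hM0
    nlinarith

/-- A uniform (in `N`) lattice convolution estimate with exponents `4-2β` and `2-β`:
`∑_{h ≠ 0, h ≠ k, |h| ≤ N or |k-h| ≤ N} |h|^{-(4-2β)} |k-h|^{-(2-β)} ≤ c |k|^{-(2-β)}`. -/
theorem lattice_convolution_uniform_estimate (γ β : ℝ)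
    (hγ : γ ∈ Set.Ioo (0:ℝ) 1) (hβ : β ∈ Set.Ioo (0:ℝ) 1) :
    ∃ c : ℝ, 0 < c ∧ ∀ N : ℝ, 1 ≤ N → ∀ k : ℤ × ℤ, k ≠ 0 →
      (∑' h : {h : ℤ × ℤ // h ≠ 0 ∧ h ≠ k ∧ (latNorm h ≤ N ∨ latNorm (k - h) ≤ N)},
        ENNReal.ofReal
          (latNorm h.1 ^ (-(4 - 2 * β)) * latNorm (k - h.1) ^ (-(2 - β))))
        ≤ ENNReal.ofReal (c * latNorm k ^ (-(2 - β))) := by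
  obtain ⟨hβ1, hβ2⟩ := hβ
  have ha : (2:ℝ) < 4 - 2 * β := by linarith
  have hS : Summable fun m : ℤ × ℤ => latNorm m ^ (-(4 - 2 * β)) := latNorm_summable ha
  set S : ℝ := ∑' m : ℤ × ℤ, latNorm m ^ (-(4 - 2 * β)) with hSdef
  have hS0 : 0 ≤ S := tsum_nonneg fun m => Real.rpow_nonneg (latNorm_nonneg _) _
  have h2b : (0:ℝ) < 2 ^ (2 - β) := Real.rpow_pos_of_pos (by norm_num) _
  refine ⟨2 ^ (2 - β) * 2 * (S + 1), by positivity, ?_⟩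
  intro N hN k hk
  have hAnonneg : ∀ m : ℤ × ℤ, 0 ≤ latNorm m ^ (-(4 - 2 * β)) :=
    fun m => Real.rpow_nonneg (latNorm_nonneg _) _
  have hSinf : (∑' m : ℤ × ℤ, ENNReal.ofReal (latNorm m ^ (-(4 - 2 * β)))) = ENNReal.ofReal S := by
    rw [hSdef, ENNReal.ofReal_tsum_of_nonneg hAnonneg hS]
  have htk0 : 0 ≤ latNorm k ^ (-(2 - β)) := Real.rpow_nonneg (latNorm_nonneg _) _
  set C : ℝ≥0∞ := ENNReal.ofReal (2 ^ (2 - β) * latNorm k ^ (-(2 - β))) with hCdef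
  calc
    (∑' h : {h : ℤ × ℤ // h ≠ 0 ∧ h ≠ k ∧ (latNorm h ≤ N ∨ latNorm (k - h) ≤ N)},
        ENNReal.ofReal
          (latNorm h.1 ^ (-(4 - 2 * β)) * latNorm (k - h.1) ^ (-(2 - β))))
      ≤ ∑' h : {h : ℤ × ℤ // h ≠ 0 ∧ h ≠ k ∧ (latNorm h ≤ N ∨ latNorm (k - h) ≤ N)},
        C * (ENNReal.ofReal (latNorm h.1 ^ (-(4 - 2 * β)))
          + ENNReal.ofReal (latNorm (k - h.1) ^ (-(4 - 2 * β)))) := by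
      apply ENNReal.tsum_le_tsum
      intro h
      obtain ⟨hh0, hhk, -⟩ := h.2
      have hkey := latNorm_key β hβ1 hβ2 k h.1 hk hh0 hhk
      calc ENNReal.ofReal (latNorm h.1 ^ (-(4 - 2 * β)) * latNorm (k - h.1) ^ (-(2 - β)))
          ≤ ENNReal.ofReal (2 ^ (2 - β) * latNorm k ^ (-(2 - β)) *
              (latNorm h.1 ^ (-(4 - 2 * β)) + latNorm (k - h.1) ^ (-(4 - 2 * β)))) :=
            ENNReal.ofReal_le_ofReal hkey
        _ = C * (ENNReal.ofReal (latNorm h.1 ^ (-(4 - 2 * β)))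
              + ENNReal.ofReal (latNorm (k - h.1) ^ (-(4 - 2 * β)))) := by
            rw [hCdef, ENNReal.ofReal_mul (by positivity),
              ENNReal.ofReal_add (hAnonneg _) (hAnonneg _)]
    _ = C * ((∑' h : {h : ℤ × ℤ // h ≠ 0 ∧ h ≠ k ∧ (latNorm h ≤ N ∨ latNorm (k - h) ≤ N)},
          ENNReal.ofReal (latNorm h.1 ^ (-(4 - 2 * β))))
        + ∑' h : {h : ℤ × ℤ // h ≠ 0 ∧ h ≠ k ∧ (latNorm h ≤ N ∨ latNorm (k - h) ≤ N)},
          ENNReal.ofReal (latNorm (k - h.1) ^ (-(4 - 2 * β)))) := by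
      rw [← ENNReal.tsum_add, ENNReal.tsum_mul_left]
    _ ≤ C * (ENNReal.ofReal S + ENNReal.ofReal S) := by
      apply mul_le_mul_right
      apply add_le_add
      · rw [← hSinf]
        exact ENNReal.tsum_comp_le_tsum_of_injective Subtype.val_injective
          (fun m => ENNReal.ofReal (latNorm m ^ (-(4 - 2 * β))))
      · have hshift : (∑' h : ℤ × ℤ, ENNReal.ofReal (latNorm (k - h) ^ (-(4 - 2 * β))))
            = ∑' m : ℤ × ℤ, ENNReal.ofReal (latNorm m ^ (-(4 - 2 * β))) := by
          exact (Equiv.subLeft k).tsum_eq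
            (fun m => ENNReal.ofReal (latNorm m ^ (-(4 - 2 * β))))
        rw [← hSinf, ← hshift]
        exact ENNReal.tsum_comp_le_tsum_of_injective Subtype.val_injective
          (fun m => ENNReal.ofReal (latNorm (k - m) ^ (-(4 - 2 * β))))
    _ ≤ ENNReal.ofReal (2 ^ (2 - β) * 2 * (S + 1) * latNorm k ^ (-(2 - β))) := by
      rw [hCdef, ← ENNReal.ofReal_add hS0 hS0, ← ENNReal.ofReal_mul (by positivity)]
      apply ENNReal.ofReal_le_ofReal
      nlinarith [mul_nonneg h2b.le htk0]
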